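/- arXiv:2402.02250 — 5 statements merged into one kernel-verified Lean document; each statement's English description precedes it below -/
import Mathlib

section
/- A partition λ = (λ₁ ≥ λ₂ ≥ … ≥ λ_r > 0) is a palindrome partition (i.e. B(λ) equals its reversal) if and only if λ_i + λ_{r+2−i} = λ₁ + 1 for every i with 2 ≤ i ≤ r. -/
/-- A partition encoded as its list of parts in weakly decreasing order,
all parts positive. -/
def IsPartition (l : List ℕ) : Prop :=
  List.Pairwise (· ≥ ·) l ∧ ∀ x ∈ l, 0 < x

/-- Auxiliary: given the previous part and the remaining parts (read from the
smallest part upward), produce the rest of the boundary word. -/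
def wordAux : ℕ → List ℕ → List Bool
  | _, [] => []
  | prev, a :: rest => (false :: List.replicate (a - prev) true) ++ wordAux a rest

/-- `partitionWord l` is the word `B(λ)`: trace the southeast boundary of the
Young diagram of `λ` from southwest to northeast, recording `true` for each
horizontal step and `false` for each vertical step, then delete the initial
`true` and the final `false`. -/
def partitionWord (l : List ℕ) : List Bool :=
  match l.reverse with
  | [] => []
  | a :: rest => List.replicate (a - 1) true ++ wordAux a rest

/-- The conjugate (transpose) partition. -/
def conjugate (l : List ℕ) : List ℕ :=
  (List.range l.headI).map fun j => (l.filter fun x => decide (j < x)).length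

/-- `PP n` is the number of palindrome partitions of `n`. -/
noncomputable def PP (n : ℕ) : ℕ :=
  {l : List ℕ | IsPartition l ∧ l.sum = n ∧
    partitionWord l = (partitionWord l).reverse}.ncard

/-- `RCount n` is the number of partitions `λ` of `n` such that the partition
corresponding to the reversed word `B(λ)ʳ` is also a partition of `n`. -/
noncomputable def RCount (n : ℕ) : ℕ :=
  {l : List ℕ | IsPartition l ∧ l.sum = n ∧
    ∃ μ : List ℕ, IsPartition μ ∧ μ.sum = n ∧
      partitionWord μ = (partitionWord l).reverse}.ncard

/-- `T n k` is the number of nondecreasing sequences of `n` integers in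
`[-k, k]` summing to zero. -/
noncomputable def T (n k : ℕ) : ℕ :=
  {f : Fin n → ℤ | (∀ i j : Fin n, i ≤ j → f i ≤ f j) ∧
    (∀ i, -(k : ℤ) ≤ f i ∧ f i ≤ (k : ℤ)) ∧ ∑ i, f i = 0}.ncard

/-- `NRect a b` is the number of partitions of `a*b/2` with at most `a` parts,
each part at most `b`. -/
noncomputable def NRect (a b : ℕ) : ℕ :=
  {μ : Fin a → ℕ | (∀ i j : Fin a, i ≤ j → μ j ≤ μ i) ∧
    (∀ i, μ i ≤ b) ∧ ∑ i, μ i = a * b / 2}.ncard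

/-! Reading the parts of `λ` from the smallest up as `a₁ ≤ ⋯ ≤ a_r` and putting `a₀ = 1`,
`B(λ) = 1^(a₁-a₀) 0 1^(a₂-a₁) 0 ⋯ 0 1^(a_r-a_{r-1})`. Reversing such a word reverses its
blocks of `1`s, and the blocks are recovered by splitting at the `0`s, so `B(λ)` is a
palindrome iff the gap sequence `(a_{j+1} - a_j)` is. Since `a` is monotone, the gaps are
palindromic iff `a_j + a_{r-j}` does not depend on `j`, which in terms of `λ` is the condition
`λᵢ + λ_{r+2-i} = λ₁ + 1`. -/

namespace List

theorem intercalate_append_singleton {α : Type*} (sep y : List α) {xs : List (List α)}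
    (hxs : xs ≠ []) : sep.intercalate (xs ++ [y]) = sep.intercalate xs ++ sep ++ y := by
  induction xs with
  | nil => contradiction
  | cons x xs ih =>
    cases xs with
    | nil => simp
    | cons x' zs =>
      rw [cons_append, intercalate_cons_of_ne_nil (by simp), ih (cons_ne_nil _ _),
        intercalate_cons_cons]
      simp

theorem reverse_intercalate {α : Type*} (sep : List α) (ls : List (List α)) :
    (sep.intercalate ls).reverse = sep.reverse.intercalate (ls.map reverse).reverse := by
  induction ls with
  | nil => rfl
  | cons l ls ih =>
    cases ls with
    | nil => simp
    | cons l' zs =>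
      rw [map_cons, reverse_cons, intercalate_append_singleton _ _ (by simp), ← ih]
      simp

theorem getD_reverse' {α : Type*} {c : List α} (d : α) {j : ℕ} (hj : j < c.length) :
    c.reverse.getD j d = c.getD (c.length - 1 - j) d :=
  congrFun (getD_reverse j hj) d

theorem eq_reverse_iff_getD {α : Type*} (c : List α) (d : α) :
    c = c.reverse ↔ ∀ j < c.length, c.getD j d = c.getD (c.length - 1 - j) d := by
  constructor
  · intro h j hj
    conv_lhs => rw [h]
    exact getD_reverse' d hj
  · intro h
    refine ext_getElem (by simp) fun j hj _ => ?_
    have hj' := h j hj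
    rwa [getD_eq_getElem _ _ hj, getD_eq_getElem _ _ (by omega), ← getElem_reverse] at hj'

end List

open List

theorem forall_succ_eq_iff {α : Type*} (s : ℕ → α) (n : ℕ) :
    (∀ j < n, s (j + 1) = s j) ↔ ∀ j ≤ n, s j = s 0 := by
  constructor
  · intro h j hj
    induction j with
    | zero => rfl
    | succ j ih => rw [h j hj, ih (by omega)]
  · intro h j hj
    rw [h _ hj, h j hj.le]

theorem forall_sub_eq_sub_iff_forall_add_eq {f : ℕ → ℕ} {n : ℕ}
    (hf : ∀ j < n, f j ≤ f (j + 1)) :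
    (∀ j < n, f (j + 1) - f j = f (n - j) - f (n - 1 - j)) ↔
      ∀ j ≤ n, f j + f (n - j) = f 0 + f n := by
  have hstep : ∀ j < n, f (j + 1) - f j = f (n - j) - f (n - 1 - j) ↔
      f (j + 1) + f (n - (j + 1)) = f j + f (n - j) := by
    intro j hj
    have h₁ := hf j hj
    have h₂ := hf (n - 1 - j) (by omega)
    rw [show n - 1 - j + 1 = n - j by omega] at h₂
    rw [show n - (j + 1) = n - 1 - j by omega]
    omega
  rw [forall₂_congr hstep, forall_succ_eq_iff (fun j => f j + f (n - j)), Nat.sub_zero]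

def blockWord (d : List ℕ) : List Bool :=
  [false].intercalate (d.map (replicate · true))

theorem blockWord_cons_cons (a b : ℕ) (t : List ℕ) :
    blockWord (a :: b :: t) = replicate a true ++ false :: blockWord (b :: t) := by
  simp [blockWord]

theorem reverse_blockWord (d : List ℕ) : (blockWord d).reverse = blockWord d.reverse := by
  simp [blockWord, reverse_intercalate, map_reverse, Function.comp_def]

theorem blockWord_injective_of_ne_nil {d e : List ℕ} (hd : d ≠ []) (he : e ≠ [])
    (h : blockWord d = blockWord e) : d = e := by
  have hsplit : ∀ c : List ℕ, c ≠ [] → (blockWord c).splitOn false = c.map (replicate · true) :=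
    fun c hc => splitOn_intercalate _ (by simp [mem_replicate]) (by simpa using hc)
  have hblocks := hsplit d hd
  rw [h, hsplit e he] at hblocks
  exact (map_injective_iff.mpr (replicate_left_injective true) hblocks).symm

theorem blockWord_eq_reverse_iff (d : List ℕ) :
    blockWord d = (blockWord d).reverse ↔ d = d.reverse := by
  rw [reverse_blockWord]
  rcases eq_or_ne d [] with rfl | hd
  · simp
  · exact ⟨blockWord_injective_of_ne_nil hd (by simpa using hd), congrArg blockWord⟩

def gaps : List ℕ → List ℕ
  | a :: b :: t => (b - a) :: gaps (b :: t)
  | _ => []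

theorem length_gaps (c : List ℕ) : (gaps c).length = c.length - 1 := by
  induction c with
  | nil => rfl
  | cons a t ih => cases t <;> simp_all [gaps]

theorem getD_gaps (c : List ℕ) (j : ℕ) : (gaps c).getD j 0 = c.getD (j + 1) 0 - c.getD j 0 := by
  induction c generalizing j with
  | nil => simp [gaps]
  | cons a t ih =>
    cases t with
    | nil => cases j <;> simp [gaps]
    | cons b t => cases j <;> simp only [gaps, getD_cons_succ, getD_cons_zero, ih]

theorem replicate_append_wordAux (k prev : ℕ) (m : List ℕ) :
    replicate k true ++ wordAux prev m = blockWord (k :: gaps (prev :: m)) := by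
  induction m generalizing k prev with
  | nil => simp [wordAux, gaps, blockWord]
  | cons a rest ih => simp [wordAux, gaps, blockWord_cons_cons, ← ih]

theorem partitionWord_eq_blockWord_gaps (l : List ℕ) :
    partitionWord l = blockWord (gaps (1 :: l.reverse)) := by
  unfold partitionWord
  cases l.reverse with
  | nil => rfl
  | cons a rest => simp [gaps, replicate_append_wordAux]

def HasConstantSymmetricSums (c : List ℕ) : Prop :=
  ∀ j < c.length, c.getD j 0 + c.getD (c.length - 1 - j) 0 = c.getD 0 0 + c.getD (c.length - 1) 0

theorem gaps_eq_reverse_iff {c : List ℕ} (hc : c.Pairwise (· ≤ ·)) :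
    gaps c = (gaps c).reverse ↔ HasConstantSymmetricSums c := by
  have hmono : ∀ j < c.length - 1, c.getD j 0 ≤ c.getD (j + 1) 0 := fun j hj => by
    rw [getD_eq_getElem _ _ (by omega), getD_eq_getElem _ _ (by omega)]
    exact hc.isChain.getElem j (by omega)
  calc gaps c = (gaps c).reverse
      ↔ ∀ j < c.length - 1, c.getD (j + 1) 0 - c.getD j 0 =
          c.getD (c.length - 1 - j) 0 - c.getD (c.length - 1 - 1 - j) 0 := by
        rw [eq_reverse_iff_getD _ 0, length_gaps]
        refine forall₂_congr fun j hj => ?_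
        rw [getD_gaps, getD_gaps, show c.length - 1 - 1 - j + 1 = c.length - 1 - j by omega]
    _ ↔ ∀ j ≤ c.length - 1, c.getD j 0 + c.getD (c.length - 1 - j) 0 =
          c.getD 0 0 + c.getD (c.length - 1) 0 := forall_sub_eq_sub_iff_forall_add_eq hmono
    _ ↔ HasConstantSymmetricSums c := by
        rcases eq_or_ne c [] with rfl | hc
        · simp [HasConstantSymmetricSums]
        · have := length_pos_iff.mpr hc
          exact forall_congr' fun j => imp_congr_left (by omega)

theorem HasConstantSymmetricSums.reverse {c : List ℕ} (h : HasConstantSymmetricSums c) :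
    HasConstantSymmetricSums c.reverse := by
  intro j hj
  rw [length_reverse] at hj ⊢
  have hsym := h (c.length - 1 - j) (by omega)
  rw [show c.length - 1 - (c.length - 1 - j) = j by omega] at hsym
  rw [getD_reverse' 0 hj, getD_reverse' 0 (by omega), getD_reverse' 0 (by omega),
    getD_reverse' 0 (by omega), show c.length - 1 - (c.length - 1 - j) = j by omega,
    Nat.sub_zero, Nat.sub_self]
  omega

theorem hasConstantSymmetricSums_reverse (c : List ℕ) :
    HasConstantSymmetricSums c.reverse ↔ HasConstantSymmetricSums c :=
  ⟨fun h => by simpa using h.reverse, HasConstantSymmetricSums.reverse⟩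

theorem hasConstantSymmetricSums_append_singleton (l : List ℕ) (a : ℕ) :
    HasConstantSymmetricSums (l ++ [a]) ↔
      ∀ j, 1 ≤ j → j < l.length → l.getD j 0 + l.getD (l.length - j) 0 = l.getD 0 0 + a := by
  have hget : ∀ j < l.length, (l ++ [a]).getD j 0 = l.getD j 0 :=
    fun j hj => getD_append _ _ _ _ hj
  have hlast : (l ++ [a]).getD l.length 0 = a := by simp
  unfold HasConstantSymmetricSums
  rw [length_append, length_singleton, Nat.add_sub_cancel, hlast]
  constructor
  · intro h j hj₁ hj
    have hsym := h j (by omega)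
    rwa [hget j hj, hget _ (by omega), hget 0 (by omega)] at hsym
  · intro h j hj
    rcases Nat.eq_zero_or_pos j with rfl | hj₁
    · rw [Nat.sub_zero, hlast]
    rcases Nat.lt_or_ge j l.length with hjl | hjl
    · rw [hget j hjl, hget _ (by omega), hget 0 (by omega)]
      exact h j hj₁ hjl
    · rw [show j = l.length by omega, hlast, Nat.sub_self, add_comm]

theorem palindromePaper_stmt2_general (l : List ℕ) (hl : IsPartition l) :
    partitionWord l = (partitionWord l).reverse ↔
      ∀ i : ℕ, 2 ≤ i → i ≤ l.length →
        l.getD (i - 1) 0 + l.getD (l.length + 2 - i - 1) 0 = l.headI + 1 := by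
  have hsorted : (1 :: l.reverse).Pairwise (· ≤ ·) :=
    pairwise_cons.mpr ⟨fun x hx => hl.2 x (mem_reverse.mp hx), pairwise_reverse.mpr hl.1⟩
  rw [partitionWord_eq_blockWord_gaps, blockWord_eq_reverse_iff, gaps_eq_reverse_iff hsorted,
    show 1 :: l.reverse = (l ++ [1]).reverse by simp, hasConstantSymmetricSums_reverse,
    hasConstantSymmetricSums_append_singleton, show l.getD 0 0 = l.headI by cases l <;> rfl]
  constructor
  · intro h i hi₂ hi
    have hsym := h (i - 1) (by omega) (by omega)
    rwa [show l.length - (i - 1) = l.length + 2 - i - 1 by omega] at hsym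
  · intro h j hj₁ hj
    have hsym := h (j + 1) (by omega) (by omega)
    rwa [Nat.add_sub_cancel, show l.length + 2 - (j + 1) - 1 = l.length - j by omega] at hsym

/-- a partition `λ = (λ₁ ≥ … ≥ λ_r > 0)` is a palindrome partition
(`B(λ)` equals its reversal) iff `λᵢ + λ_{r+2-i} = λ₁ + 1` for all `2 ≤ i ≤ r`. -/
theorem palindromePaper_stmt2 (l : List ℕ) (hl : IsPartition l) (hne : l ≠ []) :
    partitionWord l = (partitionWord l).reverse ↔
      ∀ i : ℕ, 2 ≤ i → i ≤ l.length →
        l.getD (i - 1) 0 + l.getD (l.length + 2 - i - 1) 0 = l.headI + 1 :=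
  palindromePaper_stmt2_general l hl
end

section
/- For all nonnegative integers k and l, the number of partitions μ fitting inside a 2k × 2l rectangle (at most 2k parts, each part at most 2l) that are equal to the 180°-rotation of their complement in that rectangle — i.e. satisfying μ_i + μ_{2k+1−i} = 2l for all 1 ≤ i ≤ 2k, where μ_j = 0 for j greater than the number of parts — equals the binomial coefficient C(k+l, k). (In particular any such μ has exactly 2kl boxes.) -/
/-!
A self-complementary `μ` in the `2k × 2l` rectangle is determined by its first `k` parts, and
these are at least `l` because `μ i ≥ μ (rev i) = 2l - μ i`. Subtracting them from `2l` gives an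
arbitrary partition in a `k × l` box, and such partitions are counted by stars and bars: the
monotone sequence `h` bounded by `l` corresponds to the `k`-subset `{h i + i}` of `Fin (k + l)`.
-/

namespace Fin

variable {α : Type*} {k m : ℕ}

def padWith (c : α) (h : Fin k → α) (j : Fin m) : α :=
  if hj : (j : ℕ) < k then h ⟨j, hj⟩ else c

theorem padWith_of_lt (c : α) (h : Fin k → α) {j : Fin m} (hj : (j : ℕ) < k) :
    padWith c h j = h ⟨j, hj⟩ :=
  dif_pos hj

theorem padWith_of_le (c : α) (h : Fin k → α) {j : Fin m} (hj : k ≤ (j : ℕ)) :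
    padWith c h j = c :=
  dif_neg hj.not_gt

@[simp]
theorem padWith_castLE (c : α) (h : Fin k → α) (hkm : k ≤ m) (i : Fin k) :
    padWith c h (castLE hkm i) = h i :=
  padWith_of_lt c h i.isLt

theorem monotone_padWith [Preorder α] {c : α} {h : Fin k → α} (hh : Monotone h)
    (hc : ∀ i, h i ≤ c) : Monotone (padWith (m := m) c h) := by
  intro i j hij
  unfold padWith
  split_ifs with hi hj hj
  · exact hh (Fin.mk_le_mk.2 hij)
  · exact hc _
  · exact absurd (lt_of_le_of_lt (Fin.le_def.1 hij) hj) hi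
  · exact le_rfl

theorem padWith_le [Preorder α] {c : α} {h : Fin k → α} (hc : ∀ i, h i ≤ c) (j : Fin m) :
    padWith c h j ≤ c := by
  unfold padWith
  split_ifs
  exacts [hc _, le_rfl]

theorem apply_add_le_apply_add_of_strictMono {f : Fin k → ℕ} (hf : StrictMono f)
    {i j : Fin k} (hij : i ≤ j) : f i + j ≤ f j + i := by
  obtain ⟨j, hj⟩ := j
  change (i : ℕ) ≤ j at hij
  revert hj
  induction j, hij using Nat.le_induction with
  | base => simp
  | succ n hin ih =>
    intro hj
    have hlt : f ⟨n, by omega⟩ < f ⟨n + 1, hj⟩ := hf (Fin.mk_lt_mk.2 n.lt_succ_self)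
    have := ih (by omega)
    simp only at this ⊢
    omega

def monotoneBoundedEquivOrderEmbedding (k l : ℕ) :
    {h : Fin k → ℕ // Monotone h ∧ ∀ i, h i ≤ l} ≃ (Fin k ↪o Fin (k + l)) where
  toFun h := OrderEmbedding.ofStrictMono (fun i => ⟨h.1 i + i, by have := h.2.2 i; omega⟩)
    fun i j hij => by
      have := h.2.1 hij.le
      simp only [Fin.lt_def] at hij ⊢
      omega
  invFun f := ⟨fun i => f i - i, by
    have hf : StrictMono fun i => (f i : ℕ) := Fin.val_strictMono.comp f.strictMono
    refine ⟨fun i j hij => ?_, fun i => ?_⟩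
    · have := apply_add_le_apply_add_of_strictMono hf hij
      dsimp only
      omega
    · have hk : k - 1 < k := by have := i.isLt; omega
      have hlast := apply_add_le_apply_add_of_strictMono hf (i := i) (j := ⟨k - 1, hk⟩)
        (Fin.mk_le_mk.2 (by have := i.isLt; omega))
      have := (f ⟨k - 1, hk⟩).isLt
      dsimp only at hlast ⊢
      omega⟩
  left_inv h := Subtype.ext <| funext fun i => Nat.add_sub_cancel _ _
  right_inv f := by
    have hf : StrictMono fun i => (f i : ℕ) := Fin.val_strictMono.comp f.strictMono
    ext i
    have hzero := apply_add_le_apply_add_of_strictMono hf (i := ⟨0, by have := i.isLt; omega⟩)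
      (j := i) (Fin.mk_le_mk.2 (Nat.zero_le _))
    dsimp only at hzero
    exact Nat.sub_add_cancel (by omega)

theorem card_monotone_bounded (k l : ℕ) :
    Nat.card {h : Fin k → ℕ // Monotone h ∧ ∀ i, h i ≤ l} = (k + l).choose k := by
  rw [Nat.card_congr ((monotoneBoundedEquivOrderEmbedding k l).trans
    Set.powersetCard.ofFinEmbEquiv), Set.powersetCard.card, Nat.card_fin]

end Fin

def selfComplementary (a b : ℕ) : Set (Fin a → ℕ) :=
  {μ | (∀ i j : Fin a, i ≤ j → μ j ≤ μ i) ∧ (∀ i, μ i ≤ b) ∧ ∀ i : Fin a, μ i + μ i.rev = b}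

namespace selfComplementary

theorem le_apply_of_val_lt {k l : ℕ} {μ : Fin (2 * k) → ℕ}
    (hμ : μ ∈ selfComplementary (2 * k) (2 * l)) {j : Fin (2 * k)} (hj : (j : ℕ) < k) :
    l ≤ μ j := by
  have := hμ.1 _ _ (show j ≤ j.rev by rw [Fin.le_def, Fin.val_rev]; omega)
  have := hμ.2.2 j
  omega

def equivMonotoneBounded (k l : ℕ) :
    selfComplementary (2 * k) (2 * l) ≃ {h : Fin k → ℕ // Monotone h ∧ ∀ i, h i ≤ l} where
  toFun μ := ⟨fun i => 2 * l - μ.1 (i.castLE (by omega)),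
    fun i j hij => Nat.sub_le_sub_left (μ.2.1 _ _ hij) _,
    fun i => by
      have := le_apply_of_val_lt μ.2 (j := i.castLE (by omega)) i.isLt
      dsimp only
      omega⟩
  -- Padding `h` with `l` makes one formula serve both halves:
  -- it is `2l - h j` on the first half and `h (rev j)` on the second.
  invFun h := ⟨fun j => l + Fin.padWith l h.1 j.rev - Fin.padWith l h.1 j, by
    have hmono := Fin.monotone_padWith (m := 2 * k) h.2.1 h.2.2
    have hle := Fin.padWith_le (m := 2 * k) h.2.2
    refine ⟨fun i j hij => ?_, fun j => ?_, fun j => ?_⟩ <;> dsimp only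
    · have := hmono hij
      have := hmono (Fin.rev_le_rev.2 hij)
      omega
    · have := hle j
      have := hle j.rev
      omega
    · have := hle j
      have := hle j.rev
      rw [Fin.rev_rev]
      omega⟩
  left_inv μ := by
    ext j
    have hc := μ.2.2.2 j
    have hb := μ.2.2.1 j
    dsimp only
    rcases lt_or_ge (j : ℕ) k with hj | hj
    · rw [Fin.padWith_of_lt _ _ hj, Fin.padWith_of_le _ _ (by rw [Fin.val_rev]; omega)]
      change l + l - (2 * l - μ.1 j) = μ.1 j
      omega
    · rw [Fin.padWith_of_le _ _ hj, Fin.padWith_of_lt _ _ (by rw [Fin.val_rev]; omega)]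
      change l + (2 * l - μ.1 j.rev) - l = μ.1 j
      omega
  right_inv h := by
    ext i
    dsimp only
    rw [Fin.padWith_castLE, Fin.padWith_of_le _ _ (by rw [Fin.val_rev, Fin.val_castLE]; omega)]
    have := h.2.2 i
    omega

end selfComplementary

/-- the number of partitions `μ` inside a `2k × 2l` rectangle
(at most `2k` parts, each at most `2l`, encoded as an antitone function
`Fin (2k) → ℕ`) equal to the 180°-rotation of their complement in the
rectangle, i.e. with `μ i + μ (rev i) = 2l` for all `i`, is `C(k+l, k)`. -/
theorem palindromePaper_stmt6 (k l : ℕ) :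
    {μ : Fin (2 * k) → ℕ | (∀ i j : Fin (2 * k), i ≤ j → μ j ≤ μ i) ∧
        (∀ i, μ i ≤ 2 * l) ∧
        ∀ i : Fin (2 * k), μ i + μ i.rev = 2 * l}.ncard
      = (k + l).choose k := by
  change (selfComplementary (2 * k) (2 * l)).ncard = _
  rw [← Nat.card_coe_set_eq, Nat.card_congr (selfComplementary.equivMonotoneBounded k l),
    Fin.card_monotone_bounded]
end

section
/- For all nonnegative integers k and l, the number of partitions μ fitting inside a (2k+1) × 2l rectangle (at most 2k+1 parts, each part at most 2l) that are equal to the 180°-rotation of their complement in that rectangle — i.e. satisfying μ_i + μ_{2k+2−i} = 2l for all 1 ≤ i ≤ 2k+1, where μ_j = 0 for j greater than the number of parts — equals the binomial coefficient C(k+l, k). (Any such μ has middle row μ_{k+1} = l and exactly (2k+1)l boxes.) -/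
/-!
Rows `i` and `2k - i` of a self-complementary `μ` add up to `2l`, so the middle row is `l` and
`μ` is determined by its top `k` rows, which are `l + ν` for an arbitrary partition `ν` inside a
`k × l` box. Such `ν` are counted by `C(k + l, k)`: `i ↦ i + (l - ν i)` is a strictly increasing
map `Fin k → Fin (k + l)`, i.e. a `k`-subset of `Fin (k + l)`.
-/

namespace Fin

variable {m n : ℕ} {g : Fin m → Fin n}

theorem val_add_sub_le_of_strictMono (hg : StrictMono g) {i j : Fin m} (hij : i ≤ j) :
    (g i : ℕ) + (j - i) ≤ g j := by
  have hmaps : Set.MapsTo g (Finset.Icc i j) (Finset.Icc (g i) (g j)) := fun x hx => by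
    simp only [Finset.coe_Icc, Set.mem_Icc] at hx ⊢
    exact ⟨hg.monotone hx.1, hg.monotone hx.2⟩
  have hcard := Finset.card_le_card_of_injOn g hmaps hg.injective.injOn
  simp only [card_Icc] at hcard
  have := hg.monotone hij
  rw [le_def] at this hij
  omega

theorem le_val_of_strictMono (hg : StrictMono g) (i : Fin m) : (i : ℕ) ≤ g i := by
  have := val_add_sub_le_of_strictMono hg (le_def.2 (Nat.zero_le i) : ⟨0, i.pos⟩ ≤ i)
  simp only at this
  omega

theorem val_add_le_of_strictMono (hg : StrictMono g) (i : Fin m) : (g i : ℕ) + m ≤ n + i := by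
  let last : Fin m := ⟨m - 1, by have := i.2; omega⟩
  have := val_add_sub_le_of_strictMono hg (le_def.2 (Nat.le_pred_of_lt i.2) : i ≤ last)
  have := (g last).2
  simp only [last] at *
  omega

end Fin

theorem Nat.card_orderEmbedding_fin (k n : ℕ) : Nat.card (Fin k ↪o Fin n) = n.choose k := by
  rw [Nat.card_congr Set.powersetCard.ofFinEmbEquiv, Set.powersetCard.card, Nat.card_fin]

def antitoneBoundedEquiv (k l : ℕ) :
    {ν : Fin k → ℕ // Antitone ν ∧ ∀ i, ν i ≤ l} ≃ (Fin k ↪o Fin (k + l)) where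
  toFun ν := OrderEmbedding.ofStrictMono (fun i => ⟨i + (l - ν.1 i), by omega⟩) fun i j hij => by
    have := ν.2.1 hij.le
    simp only [Fin.mk_lt_mk]
    omega
  invFun g :=
    have hg : StrictMono (g : Fin k → Fin (k + l)) := g.strictMono
    ⟨fun i => l + i - g i, fun i j hij => by
      have := Fin.val_add_sub_le_of_strictMono hg hij
      dsimp only
      omega, fun i => by
      have := Fin.le_val_of_strictMono hg i
      dsimp only
      omega⟩
  left_inv ν := by
    ext i
    show l + i - (i + (l - ν.1 i)) = ν.1 i
    have := ν.2.2 i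
    omega
  right_inv g := by
    ext i
    show i + (l - (l + i - g i)) = (g i : ℕ)
    have hg : StrictMono (g : Fin k → Fin (k + l)) := g.strictMono
    have := Fin.le_val_of_strictMono hg i
    have := Fin.val_add_le_of_strictMono hg i
    omega

section SelfComplementary

variable {k l : ℕ}

def extendByZero (ν : Fin k → ℕ) (j : ℕ) : ℕ :=
  if h : j < k then ν ⟨j, h⟩ else 0

theorem extendByZero_of_lt (ν : Fin k → ℕ) {j : ℕ} (h : j < k) : extendByZero ν j = ν ⟨j, h⟩ :=
  dif_pos h

theorem extendByZero_self (ν : Fin k → ℕ) : extendByZero ν k = 0 :=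
  dif_neg (lt_irrefl k)

theorem extendByZero_le {ν : Fin k → ℕ} (hν : ∀ i, ν i ≤ l) (j : ℕ) : extendByZero ν j ≤ l := by
  unfold extendByZero
  split_ifs
  exacts [hν _, Nat.zero_le l]

theorem antitone_extendByZero {ν : Fin k → ℕ} (hν : Antitone ν) : Antitone (extendByZero ν) := by
  intro i j hij
  unfold extendByZero
  split_ifs with hj hi hi
  · exact hν (Fin.mk_le_mk.2 hij)
  · omega
  all_goals exact Nat.zero_le _

/-- The self-complementary `μ` in the `(2k+1) × 2l` rectangle whose top `k` rows are `l + ν`. -/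
def symmetricExtension (l : ℕ) (ν : Fin k → ℕ) (i : Fin (2 * k + 1)) : ℕ :=
  if (i : ℕ) ≤ k then l + extendByZero ν i else l - extendByZero ν i.rev

theorem symmetricExtension_of_lt (l : ℕ) (ν : Fin k → ℕ) (i : Fin k) :
    symmetricExtension l ν ⟨i, by omega⟩ = l + ν i := by
  simp [symmetricExtension, i.2.le, extendByZero_of_lt ν i.2]

theorem antitone_symmetricExtension {ν : Fin k → ℕ} (hν : Antitone ν) :
    Antitone (symmetricExtension l ν) := by
  intro i j hij
  have hν' := antitone_extendByZero hν
  have hrev : (j.rev : ℕ) ≤ i.rev := Fin.le_def.1 (Fin.rev_le_rev.2 hij)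
  rw [Fin.le_def] at hij
  unfold symmetricExtension
  split_ifs with hj hi hi
  · exact Nat.add_le_add_left (hν' hij) l
  · omega
  · omega
  · exact Nat.sub_le_sub_left (hν' hrev) l

theorem symmetricExtension_add_rev {ν : Fin k → ℕ} (hν : ∀ i, ν i ≤ l) (i : Fin (2 * k + 1)) :
    symmetricExtension l ν i + symmetricExtension l ν i.rev = 2 * l := by
  have hi := extendByZero_le hν i
  have hri := extendByZero_le hν i.rev
  have hrev := Fin.val_rev i
  unfold symmetricExtension
  rw [Fin.rev_rev]
  split_ifs with h1 h2 h2
  · have hmid : (i : ℕ) = k := by omega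
    have hmid' : (i.rev : ℕ) = k := by omega
    rw [hmid, hmid', extendByZero_self]
    omega
  · omega
  · omega
  · omega

theorem apply_mid_of_add_rev_eq {μ : Fin (2 * k + 1) → ℕ} (hsym : ∀ i, μ i + μ i.rev = 2 * l) :
    μ ⟨k, by omega⟩ = l := by
  have hrev : (⟨k, by omega⟩ : Fin (2 * k + 1)).rev = ⟨k, by omega⟩ := Fin.ext (by simp; omega)
  have h := hsym ⟨k, by omega⟩
  rw [hrev] at h
  omega

theorem le_apply_of_add_rev_eq {μ : Fin (2 * k + 1) → ℕ} (hμ : Antitone μ)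
    (hsym : ∀ i, μ i + μ i.rev = 2 * l) {i : Fin (2 * k + 1)} (hi : (i : ℕ) ≤ k) : l ≤ μ i :=
  apply_mid_of_add_rev_eq hsym ▸ hμ (Fin.le_def.2 hi)

theorem eq_of_add_rev_eq_of_top_eq {μ μ' : Fin (2 * k + 1) → ℕ}
    (hsym : ∀ i, μ i + μ i.rev = 2 * l) (hsym' : ∀ i, μ' i + μ' i.rev = 2 * l)
    (h : ∀ i : Fin k, μ ⟨i, by omega⟩ = μ' ⟨i, by omega⟩) : μ = μ' := by
  have hupper : ∀ i : Fin (2 * k + 1), (i : ℕ) ≤ k → μ i = μ' i := by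
    intro i hi
    rcases hi.lt_or_eq with hi | hi
    · exact h ⟨i, hi⟩
    · rw [show i = ⟨k, by omega⟩ from Fin.ext hi, apply_mid_of_add_rev_eq hsym,
        apply_mid_of_add_rev_eq hsym']
  funext i
  by_cases hi : (i : ℕ) ≤ k
  · exact hupper i hi
  · have := hupper i.rev (by simp; omega)
    have := hsym i
    have := hsym' i
    omega

theorem ncard_selfComplementary_eq (k l : ℕ) :
    {μ : Fin (2 * k + 1) → ℕ | Antitone μ ∧ ∀ i, μ i + μ i.rev = 2 * l}.ncard =
      {ν : Fin k → ℕ | Antitone ν ∧ ∀ i, ν i ≤ l}.ncard := by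
  refine Set.ncard_congr (fun μ _ i => μ ⟨i, by omega⟩ - l) ?_ ?_ ?_
  · rintro μ ⟨hμ, hsym⟩
    refine ⟨fun i j hij => Nat.sub_le_sub_right (hμ hij) l,
      fun i => ?_⟩
    have := hsym ⟨i, by omega⟩
    dsimp only
    omega
  · rintro μ μ' ⟨hμ, hsym⟩ ⟨hμ', hsym'⟩ h
    refine eq_of_add_rev_eq_of_top_eq hsym hsym' fun i => ?_
    have := congrFun h i
    have := le_apply_of_add_rev_eq hμ hsym (i := ⟨i, by omega⟩) i.2.le
    have := le_apply_of_add_rev_eq hμ' hsym' (i := ⟨i, by omega⟩) i.2.le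
    omega
  · rintro ν ⟨hν, hle⟩
    refine ⟨symmetricExtension l ν, ⟨antitone_symmetricExtension hν,
      symmetricExtension_add_rev hle⟩, funext fun i => ?_⟩
    simp only [symmetricExtension_of_lt, Nat.add_sub_cancel_left]

end SelfComplementary

theorem ncard_antitone_le_eq_choose (k l : ℕ) :
    {ν : Fin k → ℕ | Antitone ν ∧ ∀ i, ν i ≤ l}.ncard = (k + l).choose k := by
  rw [← Nat.card_coe_set_eq, ← Nat.card_orderEmbedding_fin]
  exact Nat.card_congr (antitoneBoundedEquiv k l)

/-- the number of partitions `μ` inside a `(2k+1) × 2l` rectangle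
(at most `2k+1` parts, each at most `2l`, encoded as an antitone function
`Fin (2k+1) → ℕ`) equal to the 180°-rotation of their complement in the
rectangle, i.e. with `μ i + μ (rev i) = 2l` for all `i`, is `C(k+l, k)`. -/
theorem palindromePaper_stmt7 (k l : ℕ) :
    {μ : Fin (2 * k + 1) → ℕ | (∀ i j : Fin (2 * k + 1), i ≤ j → μ j ≤ μ i) ∧
        (∀ i, μ i ≤ 2 * l) ∧
        ∀ i : Fin (2 * k + 1), μ i + μ i.rev = 2 * l}.ncard
      = (k + l).choose k := by
  have hbound : {μ : Fin (2 * k + 1) → ℕ | (∀ i j : Fin (2 * k + 1), i ≤ j → μ j ≤ μ i) ∧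
      (∀ i, μ i ≤ 2 * l) ∧ ∀ i : Fin (2 * k + 1), μ i + μ i.rev = 2 * l} =
      {μ | Antitone μ ∧ ∀ i, μ i + μ i.rev = 2 * l} := by
    ext μ
    exact ⟨fun ⟨hμ, _, hsym⟩ => ⟨hμ, hsym⟩,
      fun ⟨hμ, hsym⟩ => ⟨hμ, fun i => hsym i ▸ Nat.le_add_right _ _, hsym⟩⟩
  rw [hbound, ncard_selfComplementary_eq, ncard_antitone_le_eq_choose]
end

section
/- For every integer n ≥ 1, the number PP(n) of palindrome partitions of n equals Σ C(k+l, k), summed over all pairs of nonnegative integers (k, l) with 2kl + 2k + 2l + 1 = n, plus 2·Σ C(k+l, k), summed over all pairs of nonnegative integers (k, l) with 2kl + 2k + 3l + 2 = n. (This is the coefficient form of the generating function identity Σ_n PP(n) q^n = Σ_{k,l≥0} C(k+l,k) q^{2kl+2k+2l+1} + 2 Σ_{k,l≥0} C(k+l,k) q^{2kl+2k+3l+2}.) -/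
namespace BoundaryWord

/-- The number of pairs `i < j` with `w[i] = true` and `w[j] = false`. -/
def inversions : List Bool → ℕ
  | [] => 0
  | true :: t => t.count false + inversions t
  | false :: t => inversions t

/-- The size of the partition whose word (in the sense of `partitionWord`) is `w`: the
boundary steps deleted by `partitionWord` add `w.length + 1` cells to `inversions w`. -/
def size (w : List Bool) : ℕ := inversions w + w.length + 1

theorem inversions_append (u v : List Bool) :
    inversions (u ++ v) = inversions u + inversions v + u.count true * v.count false := by
  induction u with
  | nil => simp [inversions]
  | cons x t ih =>
    cases x <;> simp [inversions, ih]
    ring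

theorem inversions_add_inversions_reverse (u : List Bool) :
    inversions u + inversions u.reverse = u.count true * u.count false := by
  induction u with
  | nil => simp [inversions]
  | cons x t ih =>
    cases x <;> simp [inversions, inversions_append] <;> grind

/-- Inverse of `wordAux`: reading from the smallest part `a`, each `true` increments the
current part and each `false` records it. -/
def partsFrom : ℕ → List Bool → List ℕ
  | a, [] => [a]
  | a, true :: t => partsFrom (a + 1) t
  | a, false :: t => a :: partsFrom a t

theorem partsFrom_ne_nil (a : ℕ) (w : List Bool) : partsFrom a w ≠ [] := by
  induction w generalizing a with
  | nil => simp [partsFrom]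
  | cons x t ih => cases x <;> simp [partsFrom, ih]

theorem le_of_mem_partsFrom {a x : ℕ} {w : List Bool} (hx : x ∈ partsFrom a w) : a ≤ x := by
  induction w generalizing a with
  | nil => simp_all [partsFrom]
  | cons b t ih =>
    cases b with
    | true => exact (ih hx).trans' (Nat.le_succ a)
    | false =>
      rcases List.mem_cons.mp hx with rfl | hx
      · rfl
      · exact ih hx

theorem pairwise_partsFrom (a : ℕ) (w : List Bool) : (partsFrom a w).Pairwise (· ≤ ·) := by
  induction w generalizing a with
  | nil => simp [partsFrom]
  | cons b t ih =>
    cases b with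
    | true => exact ih (a + 1)
    | false => exact List.pairwise_cons.mpr ⟨fun _ => le_of_mem_partsFrom, ih a⟩

theorem sum_partsFrom (a : ℕ) (w : List Bool) :
    (partsFrom a w).sum = a * (w.count false + 1) + inversions w + w.count true := by
  induction w generalizing a with
  | nil => simp [partsFrom, inversions]
  | cons b t ih => cases b <;> simp [partsFrom, inversions, ih] <;> ring

theorem partsFrom_replicate_true_append (k a : ℕ) (w : List Bool) :
    partsFrom a (List.replicate k true ++ w) = partsFrom (a + k) w := by
  induction k generalizing a with
  | zero => rfl
  | succ k ih =>
    rw [List.replicate_succ, List.cons_append, partsFrom, ih, Nat.add_assoc, Nat.add_comm 1 k]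

theorem replicate_append_wordAux_of_partsFrom_eq_cons {a c : ℕ} {w : List Bool}
    {rest : List ℕ} (h : partsFrom a w = c :: rest) :
    List.replicate (c - a) true ++ wordAux c rest = w := by
  induction w generalizing a c rest with
  | nil =>
    obtain ⟨rfl, rfl⟩ := List.cons_eq_cons.mp h
    simp [wordAux]
  | cons b t ih =>
    cases b with
    | false =>
      obtain ⟨rfl, rfl⟩ := List.cons_eq_cons.mp h
      obtain ⟨c', rest', h'⟩ := List.exists_cons_of_ne_nil (partsFrom_ne_nil a t)
      rw [h']
      simp [wordAux, ih h']
    | true =>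
      have hc : a + 1 ≤ c := le_of_mem_partsFrom (h ▸ List.mem_cons_self)
      rw [show c - a = c - (a + 1) + 1 by omega, List.replicate_succ, List.cons_append, ih h]

theorem partsFrom_wordAux {a : ℕ} {rest : List ℕ} (hle : ∀ x ∈ rest, a ≤ x)
    (hsorted : rest.Pairwise (· ≤ ·)) : partsFrom a (wordAux a rest) = a :: rest := by
  induction rest generalizing a with
  | nil => simp [wordAux, partsFrom]
  | cons b t ih =>
    obtain ⟨hbt, ht⟩ := List.pairwise_cons.mp hsorted
    have hab : a ≤ b := hle b List.mem_cons_self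
    simp only [wordAux, List.cons_append, partsFrom, partsFrom_replicate_true_append,
      Nat.add_sub_cancel' hab, ih hbt ht]

theorem partitionWord_reverse_partsFrom (w : List Bool) :
    partitionWord (partsFrom 1 w).reverse = w := by
  obtain ⟨c, rest, h⟩ := List.exists_cons_of_ne_nil (partsFrom_ne_nil 1 w)
  simpa [partitionWord, h] using replicate_append_wordAux_of_partsFrom_eq_cons h

theorem isPartition_reverse_partsFrom (w : List Bool) : IsPartition (partsFrom 1 w).reverse :=
  ⟨List.pairwise_reverse.mpr (pairwise_partsFrom 1 w),
    fun _ hx => le_of_mem_partsFrom (List.mem_reverse.mp hx)⟩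

theorem sum_reverse_partsFrom (w : List Bool) : (partsFrom 1 w).reverse.sum = size w := by
  rw [List.sum_reverse, sum_partsFrom, size, ← List.count_true_add_count_false w]
  ring

theorem partsFrom_partitionWord {l : List ℕ} (hl : IsPartition l) (hne : l ≠ []) :
    partsFrom 1 (partitionWord l) = l.reverse := by
  obtain ⟨a, rest, h⟩ := List.exists_cons_of_ne_nil (List.reverse_ne_nil_iff.mpr hne)
  have hsorted : (a :: rest).Pairwise (· ≤ ·) := h ▸ List.pairwise_reverse.mpr hl.1
  have ha : 1 ≤ a := hl.2 a (List.mem_reverse.mp (h ▸ List.mem_cons_self))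
  simp only [partitionWord, h, partsFrom_replicate_true_append, Nat.add_sub_cancel' ha,
    partsFrom_wordAux (List.pairwise_cons.mp hsorted).1 (List.pairwise_cons.mp hsorted).2]

/-- The empty partition is excluded by `1 ≤ n`: its word `[]` is also the word of `[1]`. -/
theorem PP_eq_ncard_palindromes {n : ℕ} (hn : 1 ≤ n) :
    PP n = {w : List Bool | w.reverse = w ∧ size w = n}.ncard := by
  have hne {l : List ℕ} (hl : l.sum = n) : l ≠ [] := by rintro rfl; simp at hl; omega
  refine Set.ncard_congr (fun l _ => partitionWord l) ?_ ?_ ?_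
  · rintro l ⟨hl, hsum, hpal⟩
    refine ⟨hpal.symm, ?_⟩
    rw [← sum_reverse_partsFrom, partsFrom_partitionWord hl (hne hsum), List.reverse_reverse,
      hsum]
  · rintro l₁ l₂ ⟨hl₁, hsum₁, -⟩ ⟨hl₂, hsum₂, -⟩ heq
    have := congrArg (partsFrom 1) heq
    rwa [partsFrom_partitionWord hl₁ (hne hsum₁), partsFrom_partitionWord hl₂ (hne hsum₂),
      List.reverse_inj] at this
  · rintro w ⟨hpal, hsize⟩
    refine ⟨(partsFrom 1 w).reverse, ⟨isPartition_reverse_partsFrom w, ?_, ?_⟩,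
      partitionWord_reverse_partsFrom w⟩
    · rw [sum_reverse_partsFrom, hsize]
    · rw [partitionWord_reverse_partsFrom, hpal]

def wordsWithCounts (k l : ℕ) : Set (List Bool) :=
  {u | u.count true = k ∧ u.count false = l}

theorem wordsWithCounts_zero_left (l : ℕ) :
    wordsWithCounts 0 l = {List.replicate l false} := by
  ext u
  refine ⟨fun ⟨ht, hf⟩ => ?_, by rintro rfl; simp [wordsWithCounts, List.count_replicate]⟩
  have := List.count_true_add_count_false u
  rw [Set.mem_singleton_iff, ← hf, List.replicate_count_eq_of_count_eq_length (by omega)]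

theorem wordsWithCounts_zero_right (k : ℕ) :
    wordsWithCounts k 0 = {List.replicate k true} := by
  ext u
  refine ⟨fun ⟨ht, hf⟩ => ?_, by rintro rfl; simp [wordsWithCounts, List.count_replicate]⟩
  have := List.count_true_add_count_false u
  rw [Set.mem_singleton_iff, ← ht, List.replicate_count_eq_of_count_eq_length (by omega)]

theorem wordsWithCounts_succ_succ (k l : ℕ) :
    wordsWithCounts (k + 1) (l + 1) =
      List.cons true '' wordsWithCounts k (l + 1) ∪
        List.cons false '' wordsWithCounts (k + 1) l := by
  ext (_ | ⟨_ | _, u⟩) <;> simp [wordsWithCounts]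

theorem finite_wordsWithCounts (k l : ℕ) : (wordsWithCounts k l).Finite :=
  (List.finite_length_eq Bool (k + l)).subset fun u ⟨hk, hl⟩ => by
    simp [← List.count_true_add_count_false u, hk, hl]

theorem ncard_wordsWithCounts (k l : ℕ) : (wordsWithCounts k l).ncard = (k + l).choose k := by
  induction k generalizing l with
  | zero => simp [wordsWithCounts_zero_left]
  | succ k ihk =>
    induction l with
    | zero => simp [wordsWithCounts_zero_right]
    | succ l ihl =>
      have hdisj : Disjoint (List.cons true '' wordsWithCounts k (l + 1))
          (List.cons false '' wordsWithCounts (k + 1) l) :=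
        Set.disjoint_left.mpr <| by rintro _ ⟨_, _, rfl⟩ ⟨_, _, h⟩; simp at h
      rw [wordsWithCounts_succ_succ, Set.ncard_union_eq hdisj
          ((finite_wordsWithCounts _ _).image _) ((finite_wordsWithCounts _ _).image _),
        Set.ncard_image_of_injective _ List.cons_injective,
        Set.ncard_image_of_injective _ List.cons_injective, ihk, ihl,
        show k + 1 + l = k + (l + 1) by omega, show k + 1 + (l + 1) = k + (l + 1) + 1 by omega,
        Nat.choose_succ_succ]

theorem ncard_setOf_counts (n : ℕ) (P : ℕ → ℕ → Prop)
    [DecidablePred fun p : ℕ × ℕ => P p.1 p.2] (hP : ∀ k l, P k l → k < n ∧ l < n) :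
    {u : List Bool | P (u.count true) (u.count false)}.ncard =
      ∑ p ∈ (Finset.range n ×ˢ Finset.range n).filter (fun p => P p.1 p.2),
        (p.1 + p.2).choose p.1 := by
  set f := (Finset.range n ×ˢ Finset.range n).filter (fun p => P p.1 p.2)
  have hunion : {u : List Bool | P (u.count true) (u.count false)} =
      ⋃ p ∈ (f : Set (ℕ × ℕ)), wordsWithCounts p.1 p.2 := by
    ext u
    simp only [f, wordsWithCounts, Set.mem_ofPred_eq, Set.mem_iUnion, Finset.coe_filter,
      Finset.mem_product, Finset.mem_range]
    exact ⟨fun h => ⟨(u.count true, u.count false), ⟨hP _ _ h, h⟩, rfl, rfl⟩,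
      by rintro ⟨⟨k, l⟩, ⟨-, h⟩, rfl, rfl⟩; exact h⟩
  have hdisj : (f : Set (ℕ × ℕ)).PairwiseDisjoint fun p => wordsWithCounts p.1 p.2 :=
    fun p _ q _ hpq => Set.disjoint_left.mpr fun _ ⟨hk, hl⟩ ⟨hk', hl'⟩ =>
      hpq (Prod.ext (hk.symm.trans hk') (hl.symm.trans hl'))
  rw [hunion, Set.Finite.ncard_biUnion f.finite_toSet
      (fun _ _ => finite_wordsWithCounts _ _) hdisj, finsum_mem_coe_finset]
  exact Finset.sum_congr rfl fun p _ => ncard_wordsWithCounts p.1 p.2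

theorem ncard_setOf_counts_swap (P : ℕ → ℕ → Prop) :
    {u : List Bool | P (u.count false) (u.count true)}.ncard =
      {u : List Bool | P (u.count true) (u.count false)}.ncard := by
  have hinv : Function.Involutive (List.map not) := Bool.involutive_not.list_map
  have hcount (u : List Bool) (b : Bool) : (u.map not).count b = u.count (!b) := by
    simpa using List.count_map_of_injective u not Bool.not_injective (!b)
  calc {u : List Bool | P (u.count false) (u.count true)}.ncard
      = (List.map not ⁻¹' {u | P (u.count true) (u.count false)}).ncard := by
        simp only [Set.preimage_ofPred_eq, hcount, Bool.not_true, Bool.not_false]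
    _ = _ := Set.ncard_preimage_of_injective_subset_range hinv.injective
        (by simp [hinv.surjective.range_eq])

section Palindrome

variable {α : Type*}

def mirror (m : Option α) (u : List α) : List α := u ++ m.toList ++ u.reverse

theorem reverse_mirror (m : Option α) (u : List α) : (mirror m u).reverse = mirror m u := by
  cases m <;> simp [mirror]

theorem exists_mirror_eq_of_palindrome {w : List α} (hw : w.Palindrome) :
    ∃ m u, mirror m u = w := by
  induction hw with
  | nil => exact ⟨none, [], rfl⟩
  | singleton x => exact ⟨some x, [], rfl⟩
  | cons_concat x _ ih =>
    obtain ⟨m, u, rfl⟩ := ih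
    exact ⟨m, x :: u, by simp [mirror]⟩

theorem mirror_inj {m m' : Option α} {u u' : List α} :
    mirror m u = mirror m' u' ↔ m = m' ∧ u = u' := by
  refine ⟨fun h => ?_, by rintro ⟨rfl, rfl⟩; rfl⟩
  have hlen : u.length = u'.length := by
    have := congrArg List.length h
    simp only [mirror, List.length_append, List.length_reverse] at this
    have := m.length_toList_le
    have := m'.length_toList_le
    omega
  rw [mirror, mirror, List.append_assoc, List.append_assoc] at h
  obtain ⟨rfl, h⟩ := List.append_inj h hlen
  refine ⟨?_, rfl⟩
  cases m <;> cases m' <;> simp_all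

theorem ncard_setOf_palindrome [Fintype α] {P : List α → Prop} (hP : {w | P w}.Finite) :
    {w : List α | w.reverse = w ∧ P w}.ncard = ∑ m : Option α, {u | P (mirror m u)}.ncard := by
  have hinj (m : Option α) : Function.Injective (mirror m) := fun _ _ h => (mirror_inj.mp h).2
  have hset : {w : List α | w.reverse = w ∧ P w} = ⋃ m, mirror m '' {u | P (mirror m u)} := by
    ext w
    simp only [Set.mem_ofPred_eq, Set.mem_iUnion, Set.mem_image]
    constructor
    · rintro ⟨hw, hPw⟩
      obtain ⟨m, u, rfl⟩ := exists_mirror_eq_of_palindrome (List.Palindrome.of_reverse_eq hw)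
      exact ⟨m, u, hPw, rfl⟩
    · rintro ⟨m, u, hPu, rfl⟩
      exact ⟨reverse_mirror m u, hPu⟩
  rw [hset, Set.ncard_iUnion_of_finite (s := fun m => mirror m '' {u | P (mirror m u)})
      (fun m => (hP.preimage (hinj m).injOn).image _)
      fun m m' hm => Set.disjoint_left.mpr <| by
        rintro _ ⟨u, -, rfl⟩ ⟨u', -, h⟩
        exact hm (mirror_inj.mp h).1.symm,
    finsum_eq_sum_of_fintype]
  exact Finset.sum_congr rfl fun m _ => Set.ncard_image_of_injective _ (hinj m)

end Palindrome

theorem finite_setOf_size_eq (n : ℕ) : {w : List Bool | size w = n}.Finite :=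
  (List.finite_length_le Bool n).subset fun w (hw : size w = n) => by
    simp only [size] at hw
    show w.length ≤ n
    omega

theorem size_append_append_reverse (u v : List Bool) :
    size (u ++ v ++ u.reverse) =
      2 * u.count true * u.count false + 2 * u.count true + 2 * u.count false + 1 +
        (inversions v + v.length + u.count true * v.count false +
          v.count true * u.count false) := by
  have := inversions_add_inversions_reverse u
  simp only [size, inversions_append, List.count_append, List.count_reverse, List.length_append,
    List.length_reverse, ← List.count_true_add_count_false u]
  ring_nf
  omega

theorem size_mirror_none (u : List Bool) :
    size (mirror none u) =
      2 * u.count true * u.count false + 2 * u.count true + 2 * u.count false + 1 := by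
  rw [mirror, size_append_append_reverse]
  simp [inversions]

theorem size_mirror_some_true (u : List Bool) :
    size (mirror (some true) u) =
      2 * u.count true * u.count false + 2 * u.count true + 3 * u.count false + 2 := by
  rw [mirror, size_append_append_reverse]
  simp [inversions]
  ring

theorem size_mirror_some_false (u : List Bool) :
    size (mirror (some false) u) =
      2 * u.count false * u.count true + 2 * u.count false + 3 * u.count true + 2 := by
  rw [mirror, size_append_append_reverse]
  simp [inversions]
  ring

end BoundaryWord

open BoundaryWord

/-- coefficient form of the generating function for `PP(n)`:
`PP(n) = Σ_{2kl+2k+2l+1=n} C(k+l,k) + 2 Σ_{2kl+2k+3l+2=n} C(k+l,k)`. -/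
theorem palindromePaper_stmt8 (n : ℕ) (hn : 1 ≤ n) :
    PP n =
      (∑ p ∈ (Finset.range n ×ˢ Finset.range n).filter
          (fun p => 2 * p.1 * p.2 + 2 * p.1 + 2 * p.2 + 1 = n),
        (p.1 + p.2).choose p.1) +
      2 * (∑ p ∈ (Finset.range n ×ˢ Finset.range n).filter
          (fun p => 2 * p.1 * p.2 + 2 * p.1 + 3 * p.2 + 2 = n),
        (p.1 + p.2).choose p.1) := by
  rw [PP_eq_ncard_palindromes hn, ncard_setOf_palindrome (finite_setOf_size_eq n),
    Fintype.sum_option, Fintype.sum_bool]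
  simp only [size_mirror_none, size_mirror_some_true, size_mirror_some_false]
  rw [ncard_setOf_counts_swap (fun k l => 2 * k * l + 2 * k + 3 * l + 2 = n),
    ncard_setOf_counts n (fun k l => 2 * k * l + 2 * k + 2 * l + 1 = n) (fun k l h => by omega),
    ncard_setOf_counts n (fun k l => 2 * k * l + 2 * k + 3 * l + 2 = n) (fun k l h => by omega)]
  ring
end

section
/- For every integer n ≥ 2, PP(n) = 2 if and only if n = 3 or n + 1 is prime. -/
/-!
If the word `w = B(λ)` has `o` ones and `z` zeros, then `|λ| = inv(w) + o + z + 1`, where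
`inv(w)` counts the pairs `1 … 0` in `w`: the cells of `λ` are exactly the pairs
(horizontal step, later vertical step) of the full boundary word `1 w 0`. Since
`inv(w) + inv(wʳ) = o z`, a palindrome has `2 inv(w) = o z`, hence `(o + 2)(z + 2) = 2(n + 1)`.
The cases `o = 0` and `z = 0` are `(1^n)` and `(n)`; otherwise halving an even factor yields
`n + 1 = a b` with `a ≥ 2`, `b ≥ 3`. Conversely, every such factorisation gives a third palindrome
partition `(2a - 1, a^(b-2))`, and `n + 1 ≥ 3` has one exactly when it is neither prime nor `4`.
-/

def invCount : List Bool → ℕ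
  | [] => 0
  | b :: t => (if b then t.count false else 0) + invCount t

lemma invCount_replicate_true_append (k : ℕ) (w : List Bool) :
    invCount (List.replicate k true ++ w) = k * w.count false + invCount w := by
  induction k with
  | zero => simp
  | succ k ih =>
    simp [List.replicate_succ, invCount, ih, Nat.succ_mul, List.count_replicate]
    ring

lemma invCount_append_singleton (w : List Bool) (b : Bool) :
    invCount (w ++ [b]) = invCount w + if b then 0 else w.count true := by
  induction w with
  | nil => cases b <;> simp [invCount]
  | cons c t ih => cases b <;> cases c <;> grind [invCount]

lemma invCount_reverse_add_invCount (w : List Bool) :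
    invCount w.reverse + invCount w = w.count true * w.count false := by
  induction w with
  | nil => simp [invCount]
  | cons b t ih =>
    cases b <;> simp [invCount_append_singleton, invCount, Nat.succ_mul, Nat.mul_succ] <;> linarith

lemma count_false_wordAux (prev : ℕ) (rest : List ℕ) :
    (wordAux prev rest).count false = rest.length := by
  induction rest generalizing prev with
  | nil => simp [wordAux]
  | cons a t ih => simp [wordAux, List.count_replicate, ih]

lemma wordAux_replicate_append (a k : ℕ) (s : List ℕ) :
    wordAux a (List.replicate k a ++ s) = List.replicate k false ++ wordAux a s := by
  induction k with
  | zero => simp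
  | succ k ih => simp [List.replicate_succ, wordAux, ih]

lemma invCount_add_count_true_wordAux (prev : ℕ) (rest : List ℕ)
    (h : (prev :: rest).Pairwise (· ≤ ·)) :
    invCount (wordAux prev rest) + (wordAux prev rest).count true + prev * rest.length
      = rest.sum := by
  induction rest generalizing prev with
  | nil => simp [wordAux, invCount]
  | cons a t ih =>
    obtain ⟨hle, ht⟩ := List.pairwise_cons.1 h
    obtain ⟨d, rfl⟩ := Nat.exists_eq_add_of_le (hle a List.mem_cons_self)
    simp [wordAux, invCount, invCount_replicate_true_append, count_false_wordAux, ← ih _ ht]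
    ring

section Partition

variable {l : List ℕ}

lemma exists_reverse_eq_cons (hl : l ≠ []) : ∃ a rest, l.reverse = a :: rest :=
  List.exists_cons_of_ne_nil (List.reverse_ne_nil_iff.mpr hl)

lemma partitionWord_of_reverse_eq_cons {a : ℕ} {rest : List ℕ} (h : l.reverse = a :: rest) :
    partitionWord l = List.replicate (a - 1) true ++ wordAux a rest := by
  rw [partitionWord, h]

lemma length_eq_count_false_partitionWord_add_one (hl : l ≠ []) :
    l.length = (partitionWord l).count false + 1 := by
  obtain ⟨a, rest, h⟩ := exists_reverse_eq_cons hl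
  rw [partitionWord_of_reverse_eq_cons h, ← List.length_reverse, h]
  simp [List.count_replicate, count_false_wordAux]

lemma sum_eq_invCount_partitionWord (hp : IsPartition l) (hl : l ≠ []) :
    l.sum = invCount (partitionWord l) + (partitionWord l).count true
      + (partitionWord l).count false + 1 := by
  obtain ⟨a, rest, h⟩ := exists_reverse_eq_cons hl
  have hsorted : (a :: rest).Pairwise (· ≤ ·) := h ▸ List.pairwise_reverse.2 hp.1
  have ha : 0 < a := hp.2 a (List.mem_reverse.1 (h ▸ List.mem_cons_self))
  obtain ⟨e, rfl⟩ := Nat.exists_eq_add_of_lt ha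
  rw [partitionWord_of_reverse_eq_cons h, ← List.sum_reverse, h]
  simp [invCount_replicate_true_append, count_false_wordAux, List.count_replicate,
    ← invCount_add_count_true_wordAux _ _ hsorted]
  ring

lemma eq_replicate_one_of_sum_eq_length (hpos : ∀ x ∈ l, 0 < x) (h : l.sum = l.length) :
    l = List.replicate l.length 1 := by
  induction l with
  | nil => rfl
  | cons a t ih =>
    have htpos : ∀ x ∈ t, 0 < x := fun x hx => hpos x (List.mem_cons_of_mem a hx)
    have ht : t.length ≤ t.sum := List.length_le_sum_of_one_le t htpos
    have ha := hpos a List.mem_cons_self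
    simp only [List.sum_cons, List.length_cons] at h
    rw [List.length_cons, List.replicate_succ, ← ih htpos (by omega)]
    congr
    omega

lemma eq_or_eq_or_exists_mul_of_palindrome (hp : IsPartition l) (hl : l ≠ [])
    (hpal : partitionWord l = (partitionWord l).reverse) :
    l = [l.sum] ∨ l = List.replicate l.sum 1 ∨
      ∃ p q, 3 ≤ p ∧ 3 ≤ q ∧ p * q = 2 * (l.sum + 1) := by
  have hsum := sum_eq_invCount_partitionWord hp hl
  have hlen := length_eq_count_false_partitionWord_add_one hl
  have hinv := invCount_reverse_add_invCount (partitionWord l)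
  rw [← hpal] at hinv
  set o := (partitionWord l).count true
  set z := (partitionWord l).count false
  rcases Nat.eq_zero_or_pos o with ho | ho
  · right; left
    have hsum_len : l.sum = l.length := by rw [ho, zero_mul] at hinv; omega
    rw [hsum_len]
    exact eq_replicate_one_of_sum_eq_length hp.2 hsum_len
  rcases Nat.eq_zero_or_pos z with hz | hz
  · left
    obtain ⟨x, rfl⟩ := List.length_eq_one_iff.1 (hlen.trans (by omega))
    simp
  · right; right
    exact ⟨o + 2, z + 2, by omega, by omega, by linarith⟩

end Partition

lemma exists_mul_of_mul_eq_two_mul {p q m : ℕ} (hp : 3 ≤ p) (hq : 3 ≤ q) (h : p * q = 2 * m) :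
    ∃ a b, 2 ≤ a ∧ 3 ≤ b ∧ a * b = m := by
  rcases Nat.prime_two.dvd_mul.1 (Dvd.intro m h.symm) with ⟨a, rfl⟩ | ⟨b, rfl⟩
  · exact ⟨a, q, by omega, hq, by linarith⟩
  · exact ⟨b, p, by omega, hp, by linarith⟩

lemma eq_four_or_prime_iff_not_exists_mul {m : ℕ} (hm : 2 ≤ m) :
    m = 4 ∨ m.Prime ↔ ¬∃ a b, 2 ≤ a ∧ 3 ≤ b ∧ a * b = m := by
  constructor
  · rintro hm ⟨a, b, ha, hb, rfl⟩
    rcases hm with h4 | hprime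
    · nlinarith
    · rcases Nat.prime_mul_iff.1 hprime with ⟨-, rfl⟩ | ⟨-, rfl⟩ <;> omega
  · intro h
    by_contra! hcomp
    obtain ⟨a, ⟨b, rfl⟩, ha, hab⟩ := Nat.exists_dvd_of_not_prime2 hm hcomp.2
    have hb : 2 ≤ b := by
      by_contra! hb
      interval_cases b <;> omega
    by_cases ha3 : 3 ≤ a
    · exact h ⟨b, a, hb, ha3, mul_comm b a⟩
    by_cases hb3 : 3 ≤ b
    · exact h ⟨a, b, ha, hb3, rfl⟩
    · exact hcomp.1 (by interval_cases a; interval_cases b; rfl)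

def palindromePartitions (n : ℕ) : Set (List ℕ) :=
  {l | IsPartition l ∧ l.sum = n ∧ partitionWord l = (partitionWord l).reverse}

lemma singleton_mem_palindromePartitions {n : ℕ} (hn : 0 < n) :
    [n] ∈ palindromePartitions n := by
  refine ⟨⟨List.pairwise_singleton _ n, by simpa⟩, List.sum_singleton, ?_⟩
  simp [partitionWord, wordAux]

lemma replicate_one_mem_palindromePartitions (n : ℕ) :
    List.replicate n 1 ∈ palindromePartitions n := by
  refine ⟨⟨List.pairwise_replicate.2 (Or.inr le_rfl), fun x hx => by
    simp [List.eq_of_mem_replicate hx]⟩, by simp, ?_⟩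
  cases n with
  | zero => rfl
  | succ m =>
    have h : wordAux 1 (List.replicate m 1) = List.replicate m false := by
      simpa [wordAux] using wordAux_replicate_append 1 m []
    rw [partitionWord_of_reverse_eq_cons (by rw [List.reverse_replicate, List.replicate_succ])]
    simp [h]

/-- Its word is `1^(a-1) 0^(b-2) 1^(a-1)`. -/
lemma mem_palindromePartitions_of_mul {n a b : ℕ} (ha : 2 ≤ a) (hb : 3 ≤ b)
    (h : a * b = n + 1) :
    (2 * a - 1) :: List.replicate (b - 2) a ∈ palindromePartitions n := by
  obtain ⟨c, rfl⟩ := Nat.exists_eq_add_of_le hb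
  have hrev : ((2 * a - 1) :: List.replicate (3 + c - 2) a).reverse
      = a :: (List.replicate c a ++ [2 * a - 1]) := by
    simp [show 3 + c - 2 = c + 1 by omega, List.replicate_succ']
  refine ⟨⟨?_, ?_⟩, ?_, ?_⟩
  · exact List.pairwise_cons.2 ⟨fun y hy => by rw [List.eq_of_mem_replicate hy]; omega,
      List.pairwise_replicate.2 (Or.inr le_rfl)⟩
  · simp only [List.mem_cons]
    rintro x (rfl | hx)
    · omega
    · rw [List.eq_of_mem_replicate hx]; omega
  · simp only [List.sum_cons, List.sum_replicate, smul_eq_mul]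
    rw [show 3 + c - 2 = c + 1 by omega]
    zify [show 1 ≤ 2 * a by omega] at h ⊢
    linarith
  · rw [partitionWord_of_reverse_eq_cons hrev, wordAux_replicate_append]
    have hlast : wordAux a [2 * a - 1] = false :: List.replicate (a - 1) true := by
      simp [wordAux, show 2 * a - 1 - a = a - 1 by omega]
    rw [hlast, List.append_cons, ← List.replicate_succ']
    simp

lemma palindromePartitions_eq_pair {n : ℕ} (hn : 0 < n)
    (h : ¬∃ a b, 2 ≤ a ∧ 3 ≤ b ∧ a * b = n + 1) :
    palindromePartitions n = {[n], List.replicate n 1} := by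
  refine Set.Subset.antisymm ?_ ?_
  · rintro l ⟨hp, rfl, hpal⟩
    have hl : l ≠ [] := by rintro rfl; simp at hn
    rcases eq_or_eq_or_exists_mul_of_palindrome hp hl hpal with hl | hl | ⟨p, q, hp3, hq3, hpq⟩
    · exact Or.inl hl
    · exact Or.inr hl
    · exact absurd (exists_mul_of_mul_eq_two_mul hp3 hq3 hpq) h
  · rintro l (rfl | rfl)
    · exact singleton_mem_palindromePartitions hn
    · exact replicate_one_mem_palindromePartitions n

/-- for `n ≥ 2`, `PP(n) = 2` iff `n = 3` or `n + 1` is prime. -/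
theorem palindromePaper_stmt9 (n : ℕ) (hn : 2 ≤ n) :
    PP n = 2 ↔ n = 3 ∨ Nat.Prime (n + 1) := by
  have hPP : PP n = (palindromePartitions n).ncard := rfl
  have hne : [n] ≠ List.replicate n 1 := fun h => by
    have := congrArg List.length h
    simp at this
    omega
  rw [show n = 3 ↔ n + 1 = 4 by omega, eq_four_or_prime_iff_not_exists_mul (by omega)]
  constructor
  · rintro hPP2 ⟨a, b, ha, hb, hab⟩
    have hfin : (palindromePartitions n).Finite := Set.finite_of_ncard_ne_zero (by omega)
    have h3 : 2 < PP n := (Set.two_lt_ncard_iff hfin).2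
      ⟨[n], List.replicate n 1, _, singleton_mem_palindromePartitions (by omega),
        replicate_one_mem_palindromePartitions n, mem_palindromePartitions_of_mul ha hb hab, hne,
        by simp; omega,
        fun h => by have := List.eq_of_mem_replicate (h ▸ List.mem_cons_self); omega⟩
    omega
  · intro h
    rw [hPP, palindromePartitions_eq_pair (by omega) h, Set.ncard_pair hne]
end
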